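/- With A = ∑_{k=1}^K p_k s_k s_kᵀ + σ² I_N, A_k = A − p_k s_k s_kᵀ and ŝ_k = s_kᵀ A_k⁻¹ s_k, one has the exact identity ∑_{k=1}^K 1/(1 + p_k ŝ_k) = K − N + σ² tr A⁻¹. -/

import Mathlib

open Matrix
open scoped BigOperators

lemma vmv_mulVec {N : ℕ} (w v x : Fin N → ℝ) : vecMulVec w v *ᵥ x = (v ⬝ᵥ x) • w := by
  ext i
  simp [vecMulVec_apply, mulVec, dotProduct, Finset.mul_sum, mul_comm, mul_assoc, Pi.smul_apply]
  exact Finset.sum_congr rfl fun j _ => by ring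

lemma trace_mul_vmv {N : ℕ} (M : Matrix (Fin N) (Fin N) ℝ) (v : Fin N → ℝ) :
    Matrix.trace (M * vecMulVec v v) = v ⬝ᵥ M *ᵥ v := by
  simp [Matrix.trace, Matrix.mul_apply, vecMulVec_apply, dotProduct, mulVec, Matrix.diag,
    Finset.mul_sum]
  exact Finset.sum_congr rfl fun i _ => Finset.sum_congr rfl fun j _ => by ring

lemma psd_vmv {N : ℕ} (p : ℝ) (hp : 0 ≤ p) (v : Fin N → ℝ) :
    (p • vecMulVec v v : Matrix (Fin N) (Fin N) ℝ).PosSemidef := by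
  rw [Matrix.posSemidef_iff_dotProduct_mulVec]
  constructor
  · ext i j
    simp [Matrix.conjTranspose_apply, vecMulVec_apply, mul_comm]
  · intro x
    rw [Matrix.smul_mulVec, vmv_mulVec, dotProduct_smul, dotProduct_smul]
    have : star x ⬝ᵥ v = v ⬝ᵥ x := by
      simp [dotProduct, mul_comm]
    rw [smul_eq_mul, smul_eq_mul, this]
    exact mul_nonneg hp (mul_self_nonneg _)

/-- With `A = ∑_k p_k s_k s_kᵀ + σ² I`, `A_k = A − p_k s_k s_kᵀ` and `ŝ_k = s_kᵀ A_k⁻¹ s_k`,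
one has `∑_k 1/(1 + p_k ŝ_k) = K − N + σ² tr A⁻¹`. -/
theorem stmt_15 (σ2 : ℝ) (hσ2 : 0 < σ2) (N K : ℕ) (hN : 1 ≤ N) (hK : 1 ≤ K)
    (s : Fin K → Fin N → ℝ) (p : Fin K → ℝ) (hp : ∀ k, 0 ≤ p k) :
    (∑ k, (1 + p k * (s k ⬝ᵥ
        ((((∑ j, p j • vecMulVec (s j) (s j)) + σ2 • (1 : Matrix (Fin N) (Fin N) ℝ))
            - p k • vecMulVec (s k) (s k))⁻¹ *ᵥ s k)))⁻¹)
      = (K : ℝ) - (N : ℝ) + σ2 * Matrix.trace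
          (((∑ j, p j • vecMulVec (s j) (s j)) + σ2 • (1 : Matrix (Fin N) (Fin N) ℝ))⁻¹) := by
  set V : Fin K → Matrix (Fin N) (Fin N) ℝ := fun j => p j • vecMulVec (s j) (s j) with hV
  set S : Matrix (Fin N) (Fin N) ℝ := ∑ j, V j with hS
  set A : Matrix (Fin N) (Fin N) ℝ := S + σ2 • 1 with hA
  -- positive definiteness facts
  have hI : (σ2 • (1 : Matrix (Fin N) (Fin N) ℝ)).PosDef := by
    rw [smul_one_eq_diagonal]
    exact Matrix.PosDef.diagonal fun _ => hσ2
  have hpsd : ∀ t : Finset (Fin K), (∑ j ∈ t, V j).PosSemidef := by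
    intro t
    induction t using Finset.induction with
    | empty => simpa using Matrix.PosSemidef.zero
    | insert _ _ h ih =>
        rw [Finset.sum_insert h]
        exact (psd_vmv _ (hp _) _).add ih
  have hApd : A.PosDef := Matrix.PosDef.posSemidef_add (hpsd Finset.univ) hI
  have hBpd : ∀ k, (A - V k).PosDef := by
    intro k
    have h1 : A - V k = (∑ j ∈ Finset.univ.erase k, V j) + σ2 • 1 := by
      rw [hA, hS, ← Finset.add_sum_erase _ _ (Finset.mem_univ k)]
      abel
    rw [h1]
    exact Matrix.PosDef.posSemidef_add (hpsd _) hI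
  letI := hApd.isUnit.invertible
  -- per-k identity
  have key : ∀ k, (1 + p k * (s k ⬝ᵥ ((A - V k)⁻¹ *ᵥ s k)))⁻¹
      = 1 - p k * (s k ⬝ᵥ (A⁻¹ *ᵥ s k)) := by
    intro k
    set B := A - V k with hB
    letI := (hBpd k).isUnit.invertible
    set u := B⁻¹ *ᵥ s k with hu
    set c := s k ⬝ᵥ u with hc
    have hc0 : 0 ≤ c := by
      have := (hBpd k).inv.posSemidef.dotProduct_mulVec_nonneg (s k)
      simpa [hc, hu, dotProduct, mul_comm] using this
    have hden : (0:ℝ) < 1 + p k * c := by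
      have := mul_nonneg (hp k) hc0
      linarith
    have hBu : B *ᵥ u = s k := by
      rw [hu, mulVec_mulVec, Matrix.mul_inv_of_invertible, one_mulVec]
    have hAu : A *ᵥ u = (1 + p k * c) • s k := by
      have hAB : A = B + V k := by rw [hB]; abel
      rw [hAB, add_mulVec, hBu, hV]
      rw [Matrix.smul_mulVec, vmv_mulVec, ← hc]
      rw [add_smul, one_smul, smul_smul]
    have hinv : A⁻¹ *ᵥ s k = (1 + p k * c)⁻¹ • u := by
      have h2 : A⁻¹ *ᵥ (A *ᵥ u) = u := by
        rw [mulVec_mulVec, Matrix.inv_mul_of_invertible, one_mulVec]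
      rw [hAu, mulVec_smul] at h2
      rw [← h2, smul_smul, inv_mul_cancel₀ hden.ne', one_smul]
    rw [hinv, dotProduct_smul, smul_eq_mul, ← hc]
    field_simp
    ring
  -- rewrite the sum
  have hsum : (∑ k, (1 + p k * (s k ⬝ᵥ ((A - V k)⁻¹ *ᵥ s k)))⁻¹)
      = (K : ℝ) - ∑ k, p k * (s k ⬝ᵥ (A⁻¹ *ᵥ s k)) := by
    rw [Finset.sum_congr rfl fun k _ => key k, Finset.sum_sub_distrib]
    simp
  -- the trace computation
  have htr : (∑ k, p k * (s k ⬝ᵥ (A⁻¹ *ᵥ s k))) = (N : ℝ) - σ2 * Matrix.trace A⁻¹ := by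
    have h1 : ∀ k, p k * (s k ⬝ᵥ (A⁻¹ *ᵥ s k)) = Matrix.trace (A⁻¹ * V k) := by
      intro k
      rw [hV, Matrix.mul_smul, Matrix.trace_smul, trace_mul_vmv, smul_eq_mul]
    rw [Finset.sum_congr rfl fun k _ => h1 k, ← Matrix.trace_sum, ← Matrix.mul_sum, ← hS]
    have h2 : S = A - σ2 • 1 := by rw [hA]; abel
    rw [h2, Matrix.mul_sub, Matrix.trace_sub, Matrix.inv_mul_of_invertible,
      Matrix.trace_one, Matrix.mul_smul, Matrix.trace_smul, smul_eq_mul]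
    simp
  rw [hsum, htr]
  ring
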